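/- Fix an integer r ≥ 1 and set n = 2r. With b_1,…,b_{2r}, v_{2r}, D_{2r}, m_{2r} defined as in the context, the identity m_{2r}·D_{2r} − 1 = b_1·b_2⋯b_{2r}·v_{2r} holds. -/

import Mathlib

/-- The alternating symbol `B_{i_1,…,i_k} = b_{i_1}⋯b_{i_k} − b_{i_1}⋯b_{i_{k−1}} + ⋯
+ (−1)^{k−1} b_{i_1} + (−1)^k`, with `B` of the empty list equal to `1`. -/
def altB (b : ℕ → ℤ) (L : List ℕ) : ℤ :=
  ∑ t ∈ Finset.range (L.length + 1), (-1) ^ (L.length - t) * ((L.take t).map b).prod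

/-- The list `L_j = (r+1, r, r+2, r−1, …, r+j, r+1−j)`, the concatenation of the pairs
`(r+t, r+1−t)` for `t = 1, …, j`. -/
def loopList (r j : ℕ) : List ℕ :=
  (List.range j).flatMap fun t => [r + t + 1, r - t]

variable (b : ℕ → ℤ)

lemma altB_nil : altB b [] = 1 := by simp [altB]

lemma altB_cons (a : ℕ) (L : List ℕ) :
    altB b (a :: L) = b a * altB b L + (-1) ^ (L.length + 1) := by
  rw [altB, altB]
  rw [Finset.sum_range_succ']
  simp only [List.length_cons, List.take_succ_cons, List.map_cons, List.prod_cons,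
    List.take_zero, List.map_nil, List.prod_nil, mul_one]
  rw [Finset.mul_sum]
  congr 1
  · apply Finset.sum_congr rfl
    intro t ht
    simp only [Finset.mem_range] at ht
    have : L.length + 1 - (t + 1) = L.length - t := by omega
    rw [this]; ring
 

lemma altB_split (A C : List ℕ) (a : ℕ) :
    altB b (A ++ a :: C) = (A.map b).prod * b a * altB b C
      - (-1) ^ C.length * altB b A := by
  induction A with
  | nil => rw [List.nil_append, altB_cons, altB_nil]; simp; ring
  | cons a' A ih =>
      rw [List.cons_append, altB_cons, ih, altB_cons]
      simp only [List.length_append, List.length_cons, List.map_cons, List.prod_cons]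
      rw [show A.length + (C.length + 1) + 1 = (A.length + 1) + (C.length + 1) by ring,
        pow_add, pow_add]
      ring

lemma altB_snoc (L : List ℕ) (a : ℕ) :
    altB b (L ++ [a]) = (L.map b).prod * b a - altB b L := by
  have := altB_split b L [] a
  rw [altB_nil] at this
  simpa using this

lemma altB_reverse (L : List ℕ) :
    altB b L.reverse = ∑ t ∈ Finset.range (L.length + 1),
      (-1) ^ t * ((L.drop t).map b).prod := by
  rw [altB, List.length_reverse, ← Finset.sum_range_reflect]
  apply Finset.sum_congr rfl
  intro t ht
  simp only [Finset.mem_range] at ht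
  have e1 : L.length + 1 - 1 - t = L.length - t := by omega
  rw [e1]
  have e2 : L.length - (L.length - t) = t := by omega
  rw [e2]
  rw [List.take_reverse, List.map_reverse, List.prod_reverse, e2]

def Psi (b : ℕ → ℤ) (L : List ℕ) : ℤ :=
  ∑ u ∈ Finset.range (L.length - 1), ((L.drop (u+1)).map b).prod * altB b (L.take u)

lemma Psi_append_pair (L : List ℕ) (hL : L ≠ []) (p q : ℕ) :
    Psi b (L ++ [p, q]) = b p * b q * (Psi b L + altB b L.dropLast)
      + b q * altB b L := by
  have hlen : 1 ≤ L.length := List.length_pos_iff.mpr hL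
  rw [Psi]
  simp only [List.length_append, List.length_cons, List.length_nil]
  have e0 : L.length + 2 - 1 = (L.length - 1) + 1 + 1 := by omega
  rw [e0, Finset.sum_range_succ, Finset.sum_range_succ]
  have e1 : L.length - 1 + 1 = L.length := by omega
  rw [e1]
  have h2 : (L ++ [p, q]).drop (L.length + 1) = [q] := by
    rw [show L.length + 1 = L.length + 1 by rfl, List.drop_append]
    simp [List.drop_eq_nil_of_le (by omega : L.length ≤ L.length + 1)]
  have h3 : (L ++ [p, q]).take L.length = L := List.take_left
  have h4 : (L ++ [p, q]).drop L.length = [p, q] := List.drop_left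
  have h5 : (L ++ [p, q]).take (L.length - 1) = L.dropLast := by
    rw [List.take_append_of_le_length (by omega), List.dropLast_eq_take]
  rw [h2, h3, h4, h5]
  have h6 : ∀ u ∈ Finset.range (L.length - 1),
      (((L ++ [p, q]).drop (u+1)).map b).prod * altB b ((L ++ [p,q]).take u)
      = b p * b q * (((L.drop (u+1)).map b).prod * altB b (L.take u)) := by
    intro u hu
    simp only [Finset.mem_range] at hu
    rw [List.drop_append_of_le_length (by omega), List.take_append_of_le_length (by omega)]
    simp only [List.map_append, List.prod_append, List.map_cons, List.map_nil,
      List.prod_cons, List.prod_nil]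
    ring
  rw [Finset.sum_congr rfl h6, ← Finset.mul_sum, ← Psi]
  simp only [List.map_cons, List.map_nil, List.prod_cons, List.prod_nil]
  ring

lemma loopList_zero (r : ℕ) : loopList r 0 = [] := rfl

lemma loopList_succ (r j : ℕ) :
    loopList r (j+1) = loopList r j ++ [r + j + 1, r - j] := by
  simp [loopList, List.range_succ]

lemma length_loopList (r j : ℕ) : (loopList r j).length = 2 * j := by
  induction j with
  | zero => rfl
  | succ n ih => rw [loopList_succ]; simp [ih]; omega

lemma loopList_ne_nil (r j : ℕ) (hj : 1 ≤ j) : loopList r j ≠ [] := by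
  intro h
  have := length_loopList r j
  rw [h] at this
  simp at this
  omega

lemma prod_loopList_succ (r j : ℕ) :
    ((loopList r (j+1)).map b).prod
      = ((loopList r j).map b).prod * (b (r + j + 1) * b (r - j)) := by
  rw [loopList_succ]
  simp

lemma altB_loopList_succ (r j : ℕ) :
    altB b (loopList r (j+1))
      = ((loopList r j).map b).prod * b (r + j + 1) * b (r - j)
        - (((loopList r j).map b).prod * b (r + j + 1) - altB b (loopList r j)) := by
  rw [loopList_succ, show [r + j + 1, r - j] = [r + j + 1] ++ [r - j] from rfl,
    ← List.append_assoc, altB_snoc, altB_snoc]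
  simp

lemma dropLast_loopList_succ (r j : ℕ) :
    (loopList r (j+1)).dropLast = loopList r j ++ [r + j + 1] := by
  rw [loopList_succ, show [r + j + 1, r - j] = [r + j + 1] ++ [r - j] from rfl,
    ← List.append_assoc, List.dropLast_concat]

lemma Psi_loopList_one (r : ℕ) : Psi b (loopList r 1) = b r := by
  have h : loopList r 1 = [r + 1, r] := by
    rw [show (1:ℕ) = 0 + 1 from rfl, loopList_succ]; rfl
  rw [h, Psi]
  simp [altB_nil]

lemma sum_lemma (L : List ℕ) (h1 : 1 ≤ L.length) (h2 : L.length % 2 = 0) :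
    ((L.map b).prod) * (∑ t ∈ Finset.range L.length, (-1)^t * altB b (L.drop t))
      = altB b L * (altB b L.reverse - 1) + Psi b L := by
  have hn2 : 2 ≤ L.length := by omega
  have hrev : altB b L.reverse = (∑ u ∈ Finset.range (L.length - 1),
      (-1)^(u+1) * ((L.drop (u+1)).map b).prod) + (L.map b).prod + 1 := by
    rw [altB_reverse, show L.length + 1 = (L.length - 1 + 1) + 1 by omega,
      Finset.sum_range_succ, Finset.sum_range_succ']
    rw [show L.length - 1 + 1 = L.length by omega]
    have e1 : ((-1:ℤ))^L.length * ((L.drop L.length).map b).prod = 1 := by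
      rw [List.drop_length]
      simp [Even.neg_one_pow (Nat.even_iff.mpr h2)]
    rw [e1]
    simp
  have hterm : ∀ u ∈ Finset.range (L.length - 1),
      (L.map b).prod * ((-1)^(u+1) * altB b (L.drop (u+1)))
        = (-1)^(u+1) * ((L.drop (u+1)).map b).prod * altB b L
          + ((L.drop (u+1)).map b).prod * altB b (L.take u) := by
    intro u hu
    simp only [Finset.mem_range] at hu
    have hul : u < L.length := by omega
    have hudec : L.take u ++ L[u] :: L.drop (u+1) = L := by
      conv_rhs => rw [← List.take_append_drop u L]
      congr 1
      exact (List.drop_eq_getElem_cons hul).symm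
    have hsplit := altB_split b (L.take u) (L.drop (u+1)) (L[u])
    rw [hudec] at hsplit
    have hprod : (L.map b).prod
        = ((L.take u).map b).prod * b (L[u]) * ((L.drop (u+1)).map b).prod := by
      conv_lhs => rw [← hudec]
      rw [List.map_append, List.prod_append, List.map_cons, List.prod_cons]
      ring
    have hlen : (L.drop (u+1)).length = L.length - (u+1) := List.length_drop
    rw [hlen] at hsplit
    have hsign : ((-1:ℤ))^(u+1) * (-1)^(L.length - (u+1)) = 1 := by
      rw [← pow_add, show u + 1 + (L.length - (u+1)) = L.length by omega]
      exact Even.neg_one_pow (Nat.even_iff.mpr h2)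
    linear_combination ((-1:ℤ)^(u+1) * altB b (L.drop (u+1))) * hprod
      + (-((-1:ℤ)^(u+1)) * ((L.drop (u+1)).map b).prod) * hsplit
      + (altB b (L.take u) * ((L.drop (u+1)).map b).prod) * hsign
  rw [Finset.mul_sum, show L.length = L.length - 1 + 1 by omega, Finset.sum_range_succ']
  rw [Finset.sum_congr rfl hterm, Finset.sum_add_distrib, ← Finset.sum_mul, ← Psi]
  simp only [List.drop_zero, pow_zero, one_mul]
  linear_combination (-(altB b L)) * hrev

lemma prod_loopList (r j : ℕ) :
    ((loopList r j).map b).prod = ∏ t ∈ Finset.range j, (b (r + t + 1) * b (r - t)) := by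
  induction j with
  | zero => simp [loopList_zero]
  | succ n ih => rw [prod_loopList_succ, Finset.prod_range_succ, ih]

lemma Icc_prod (r : ℕ) (hr : 1 ≤ r) :
    ∏ i ∈ Finset.Icc 1 (2 * r), b i = ((loopList r r).map b).prod := by
  rw [prod_loopList, Finset.prod_mul_distrib]
  have h1 : ∏ i ∈ Finset.Icc 1 (2 * r), b i = ∏ i ∈ Finset.range (2 * r), b (1 + i) := by
    rw [← Finset.Ico_add_one_right_eq_Icc, Finset.prod_Ico_eq_prod_range]
    rfl
  rw [h1, show 2 * r = r + r by omega, Finset.prod_range_add]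
  have hA : ∏ i ∈ Finset.range r, b (1 + (r + i)) = ∏ t ∈ Finset.range r, b (r + t + 1) :=
    Finset.prod_congr rfl (fun i _ => by congr 1; omega)
  have hB : ∏ i ∈ Finset.range r, b (1 + i) = ∏ t ∈ Finset.range r, b (r - t) := by
    rw [← Finset.prod_range_reflect]
    apply Finset.prod_congr rfl
    intro t ht
    simp only [Finset.mem_range] at ht
    congr 1
    omega
  rw [hA, hB, mul_comm]
/-- Even-dimensional case `n = 2r`: with `b`, `v_{2r}`, `D_{2r}`, `m_{2r}` as in the
paper's klt Calabi–Yau variety example (built from Sylvester's sequence `s`), the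
identity `m_{2r} · D_{2r} − 1 = b_1 b_2 ⋯ b_{2r} · v_{2r}` holds. -/
theorem even_example_identity (r : ℕ) (hr : 1 ≤ r)
    (s : ℕ → ℤ) (hs0 : s 0 = 2)
    (hsrec : ∀ m, s (m + 1) = (∏ i ∈ Finset.range (m + 1), s i) + 1)
    (b : ℕ → ℤ) (hb1 : ∀ i ≤ r, b i = s i)
    (hb2 : ∀ i, 1 ≤ i → i ≤ r →
      b (r + i) = 1 + (b (r + 1 - i) - 1) ^ 2 * altB b (loopList r (i - 1)))
    (D M v : ℤ)
    (hD : D = 2 * altB b (loopList r r))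
    (hM : M = altB b (loopList r r).reverse)
    (hv : v = 2 * (∑ t ∈ Finset.range (2 * r),
      (-1) ^ t * altB b ((loopList r r).drop t)) + 1) :
    M * D - 1 = (∏ i ∈ Finset.Icc 1 (2 * r), b i) * v := by
  -- Sylvester facts
  have hsyl : ∀ k, s k - 1 = ∏ i ∈ Finset.range k, s i := by
    intro k
    cases k with
    | zero => simp [hs0]
    | succ m => rw [hsrec m]; ring
  have hCrec : ∀ j, j ≤ r → s (r + 1 - j) = (s (r - j) - 1) * s (r - j) + 1 := by
    intro j hj
    have e1 : r + 1 - j = (r - j) + 1 := by omega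
    have h := hsyl ((r - j) + 1)
    rw [Finset.prod_range_succ, ← hsyl] at h
    rw [e1]
    linarith [h]
  have hs1 : s 1 = 3 := by
    have := hsrec 0
    simp [hs0] at this
    linarith
  have hs2 : s 2 = 7 := by
    have := hsrec 1
    rw [Finset.prod_range_succ, Finset.prod_range_one, hs0, hs1] at this
    linarith
  -- the auxiliary sequence Σ
  set Sig : ℕ → ℤ := fun j => Nat.rec (motive := fun _ => ℤ) 0
    (fun k acc => b (r + k + 1) * b (r - k) * acc + (s (r - k) - 1) * altB b (loopList r k)
      + ((loopList r k).map b).prod * b (r + k + 1)) j with hSigdef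
  have hSig0 : Sig 0 = 0 := rfl
  have hSigS : ∀ k, Sig (k + 1) = b (r + k + 1) * b (r - k) * Sig k
      + (s (r - k) - 1) * altB b (loopList r k)
      + ((loopList r k).map b).prod * b (r + k + 1) := fun k => rfl
  -- Invariant I1
  have I1 : ∀ k, k ≤ r → ((loopList r k).map b).prod - 1 = (s (r + 1 - k) - 1) * Sig k := by
    intro k
    induction k with
    | zero => intro _; simp [loopList_zero, hSig0]
    | succ k ih =>
      intro hk
      have ihk := ih (by omega)
      have hyp : b (r - k) = s (r - k) := hb1 _ (by omega)
      have hxp : b (r + k + 1) = 1 + (s (r - k) - 1) ^ 2 * altB b (loopList r k) := by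
        have h2 := hb2 (k + 1) (by omega) (by omega)
        rw [show r + (k + 1) = r + k + 1 by omega, show r + 1 - (k + 1) = r - k by omega,
          show k + 1 - 1 = k by omega] at h2
        rw [h2, hyp]
      have hcn : s (r + 1 - k) = (s (r - k) - 1) * s (r - k) + 1 := hCrec k (by omega)
      rw [hcn] at ihk
      rw [show r + 1 - (k + 1) = r - k by omega, prod_loopList_succ, hSigS, hyp, hxp]
      linear_combination (1 + (s (r - k) - 1) ^ 2 * altB b (loopList r k)) * ihk
  -- Invariant I2
  have I2 : ∀ k, 1 ≤ k → k ≤ r → Psi b (loopList r k)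
      = b (r + 1 - k) * altB b (loopList r (k - 1))
        + b (r + k) * b (r + 1 - k) * Sig (k - 1) := by
    intro k
    induction k with
    | zero => omega
    | succ k ih =>
      intro _ hk1
      by_cases hk0 : k = 0
      · subst hk0
        rw [show (1:ℕ) - 1 = 0 from rfl, show r + 1 - 1 = r by omega]
        simp [Psi_loopList_one, loopList_zero, altB_nil, hSig0]
      · have hk' : 1 ≤ k := by omega
        have ihk := ih hk' (by omega)
        have hne : loopList r k ≠ [] := loopList_ne_nil r k hk'
        have hPsiexp : Psi b (loopList r (k + 1))
            = b (r + k + 1) * b (r - k) * (Psi b (loopList r k)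
              + altB b ((loopList r k).dropLast)) + b (r - k) * altB b (loopList r k) := by
          rw [loopList_succ]
          exact Psi_append_pair b _ hne _ _
        have hdl : (loopList r k).dropLast = loopList r (k - 1) ++ [r + (k - 1) + 1] := by
          conv_lhs => rw [show k = (k - 1) + 1 by omega]
          exact dropLast_loopList_succ r (k - 1)
        have haltdl : altB b ((loopList r k).dropLast)
            = ((loopList r (k - 1)).map b).prod * b (r + k) - altB b (loopList r (k - 1)) := by
          rw [hdl, altB_snoc, show r + (k - 1) + 1 = r + k by omega]
        have hSigk : Sig k = b (r + k) * b (r + 1 - k) * Sig (k - 1)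
            + (s (r + 1 - k) - 1) * altB b (loopList r (k - 1))
            + ((loopList r (k - 1)).map b).prod * b (r + k) := by
          conv_lhs => rw [show k = (k - 1) + 1 by omega]
          rw [hSigS, show r + (k - 1) + 1 = r + k by omega,
            show r - (k - 1) = r + 1 - k by omega]
        have hbk : b (r + 1 - k) = s (r + 1 - k) := hb1 _ (by omega)
        rw [show r + 1 - (k + 1) = r - k by omega, show (k + 1) - 1 = k by omega,
          show r + (k + 1) = r + k + 1 by omega]
        rw [hPsiexp, haltdl, hSigk, ihk, hbk]
        ring
  -- the central identity
  have hG : 2 * altB b (loopList r r)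
      = 1 + ((loopList r r).map b).prod + 2 * Psi b (loopList r r) := by
    have h2 := I2 r hr (le_refl r)
    have h1 := I1 (r - 1) (by omega)
    rw [show r + 1 - (r - 1) = 2 by omega, hs2] at h1
    have hbr := altB_loopList_succ b r (r - 1)
    have hpr := prod_loopList_succ b r (r - 1)
    rw [show (r - 1) + 1 = r by omega, show r + (r - 1) + 1 = r + r by omega,
      show r - (r - 1) = 1 by omega] at hbr hpr
    rw [show r + 1 - r = 1 by omega] at h2
    have hb1v : b 1 = 3 := by rw [hb1 1 (by omega), hs1]
    have hxr : b (r + r) = 1 + (3 - 1) ^ 2 * altB b (loopList r (r - 1)) := by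
      have h3 := hb2 r hr (le_refl r)
      rw [show r + 1 - r = 1 by omega, hb1v] at h3
      exact h3
    rw [hbr, hpr, h2, hb1v, hxr]
    linear_combination (1 + (3 - 1) ^ 2 * altB b (loopList r (r - 1))) * h1
  -- assembly
  subst hD hM hv
  have hLlen : (loopList r r).length = 2 * r := length_loopList r r
  have hPW := sum_lemma b (loopList r r) (by rw [hLlen]; omega) (by rw [hLlen]; omega)
  rw [hLlen] at hPW
  rw [Icc_prod b r hr]
  linear_combination (-2 : ℤ) * hPW + hG
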